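/- Let γ > 1, M1 > M2 > 0, ε = (√(M1·M2)/3)·(M1−M2)/(M1+M2), ρ̃² = (M1/M2)^((γ−1)/(2γ)). Then (M2+ε)^(γ−1)·(ρ̃²)^γ < (M1−ε)^(γ−1), i.e. p² < p¹ in the counterexample of Section 5.1. -/

import Mathlib

/-! Since `ρ̃² ^ γ = √(M1 / M2) ^ (γ - 1)` and `t ↦ t ^ (γ - 1)` is strictly increasing, the claim
reduces to `(M2 + ε) √(M1 / M2) < M1 - ε`. Writing `M1 = a²`, `M2 = b²`, the difference of the two
sides is `a (a - b) (a² + b² + (a - b)²) / (3 (a² + b²)) > 0`. -/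

open Real

lemma rpow_div_two_mul_rpow {x : ℝ} (hx : 0 ≤ x) (s : ℝ) {γ : ℝ} (hγ : γ ≠ 0) :
    (x ^ (s / (2 * γ))) ^ γ = √x ^ s := by
  rw [← rpow_mul hx, sqrt_eq_rpow, ← rpow_mul hx]
  congr 1
  field_simp

lemma add_mul_div_lt_sub {a b : ℝ} (hb : 0 < b) (hba : b < a) :
    (b ^ 2 + a * b / 3 * (a ^ 2 - b ^ 2) / (a ^ 2 + b ^ 2)) * (a / b)
      < a ^ 2 - a * b / 3 * (a ^ 2 - b ^ 2) / (a ^ 2 + b ^ 2) := by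
  have ha : 0 < a := hb.trans hba
  have hab : 0 < a - b := sub_pos.2 hba
  have gap : a ^ 2 - a * b / 3 * (a ^ 2 - b ^ 2) / (a ^ 2 + b ^ 2)
      - (b ^ 2 + a * b / 3 * (a ^ 2 - b ^ 2) / (a ^ 2 + b ^ 2)) * (a / b)
      = a * (a - b) * (a ^ 2 + b ^ 2 + (a - b) ^ 2) / (3 * (a ^ 2 + b ^ 2)) := by
    field_simp
    ring
  rw [← sub_pos, gap]
  positivity

lemma add_mul_sqrt_div_lt_sub {M1 M2 : ℝ} (hM2 : 0 < M2) (hM : M2 < M1) :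
    (M2 + √(M1 * M2) / 3 * (M1 - M2) / (M1 + M2)) * √(M1 / M2)
      < M1 - √(M1 * M2) / 3 * (M1 - M2) / (M1 + M2) := by
  have hM1 : 0 < M1 := hM2.trans hM
  have key := add_mul_div_lt_sub (sqrt_pos.2 hM2) (sqrt_lt_sqrt hM2.le hM)
  rwa [sq_sqrt hM1.le, sq_sqrt hM2.le, ← sqrt_mul hM1.le, ← sqrt_div hM1.le] at key

theorem stmt_19 (γ M1 M2 ε ρt2 : ℝ) (hγ : 1 < γ) (hM2 : 0 < M2) (hM : M2 < M1)
    (hε : ε = (Real.sqrt (M1 * M2) / 3) * (M1 - M2) / (M1 + M2))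
    (hρt2 : ρt2 = (M1 / M2) ^ ((γ - 1) / (2 * γ))) :
    (M2 + ε) ^ (γ - 1) * ρt2 ^ γ < (M1 - ε) ^ (γ - 1) := by
  have hε_nonneg : 0 ≤ ε := by
    rw [hε]
    exact div_nonneg (mul_nonneg (by positivity) (by linarith)) (by linarith)
  have hρ : ρt2 ^ γ = √(M1 / M2) ^ (γ - 1) := by
    rw [hρt2, rpow_div_two_mul_rpow (div_pos (hM2.trans hM) hM2).le _ (by positivity)]
  rw [hρ, ← mul_rpow (by positivity) (sqrt_nonneg _)]
  refine rpow_lt_rpow (by positivity) ?_ (by linarith)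
  rw [hε]
  exact add_mul_sqrt_div_lt_sub hM2 hM
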